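/- The 0-sectional curvature of the plane spanned by ∂/∂β₁ and ∂/∂β₂ in the Freund manifold equals 1/4, independently of the point. -/

import Mathlib

/-!
The metric entries `g₂₂` and `g₄₄` along the two β-directions are each independent of the other β,
so in the curvature component `R^{β₁}_{β₁β₂β₂}` the derivative terms and all products through
`Γ^{β₁}_{β₂ l}` vanish, leaving `Σ_l Γ^{β₁}_{β₁ l} Γ^l_{β₂β₂}` over `l ∈ {α₁, α₂}`. Dividing by `g₄₄`,
`K = -¼ Σ_l ∂_l log g₂₂ · ∂_l log g₄₄ / g_ll = -¼ (-α₂/(α₁+α₂) - α₁/(α₁+α₂)) = ¼`.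
-/


open Real

/-- Entries of the Fisher information metric of the Freund manifold, as
functions of the point `p = (α₁, β₁, α₂, β₂)` in `(0,∞)⁴`. -/
noncomputable def metF (i j : Fin 4) (p : Fin 4 → ℝ) : ℝ :=
  Matrix.diagonal
    ![1 / ((p 0) ^ 2 + p 0 * p 2),
      p 2 / ((p 1) ^ 2 * (p 0 + p 2)),
      1 / ((p 2) ^ 2 + p 0 * p 2),
      p 0 / ((p 3) ^ 2 * (p 0 + p 2))] i j

/-- The metric as a matrix at `p`. -/
noncomputable def metM (p : Fin 4 → ℝ) : Matrix (Fin 4) (Fin 4) ℝ :=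
  fun i j => metF i j p

/-- Partial derivative in the `i`-th coordinate. -/
noncomputable def pd (i : Fin 4) (F : (Fin 4 → ℝ) → ℝ) (p : Fin 4 → ℝ) : ℝ :=
  deriv (fun t => F (Function.update p i t)) (p i)

/-- Levi-Civita Christoffel symbols of the first kind. -/
noncomputable def lcLow (i j k : Fin 4) (p : Fin 4 → ℝ) : ℝ :=
  (pd i (metF j k) p + pd j (metF i k) p - pd k (metF i j) p) / 2

/-- Levi-Civita Christoffel symbols of the second kind. -/
noncomputable def lcUp (h i j : Fin 4) (p : Fin 4 → ℝ) : ℝ :=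
  ∑ k : Fin 4, (metM p)⁻¹ h k * lcLow i j k p

/-- Riemann curvature tensor `R^h_{ijk}` of the Levi-Civita connection. -/
noncomputable def riem (h i j k : Fin 4) (p : Fin 4 → ℝ) : ℝ :=
  pd i (lcUp h j k) p - pd j (lcUp h i k) p +
    ∑ l : Fin 4, (lcUp h i l p * lcUp l j k p - lcUp h j l p * lcUp l i k p)

/-- Sectional curvature of the coordinate 2-plane spanned by `∂_i` and `∂_j`. -/
noncomputable def sec (i j : Fin 4) (p : Fin 4 → ℝ) : ℝ :=
  (∑ l : Fin 4, metF i l p * riem l i j j p) /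
    (metF i i p * metF j j p - (metF i j p) ^ 2)

open Function Matrix

section DiagonalMetric

variable {h i j k l : Fin 4} {p : Fin 4 → ℝ}

lemma metF_of_ne (hij : i ≠ j) (p : Fin 4 → ℝ) : metF i j p = 0 :=
  diagonal_apply_ne _ hij

lemma metM_eq_diagonal (p : Fin 4 → ℝ) : metM p = diagonal fun k => metF k k p := by
  ext i j
  by_cases hij : i = j
  · subst hij; simp [metM]
  · simp [metM, metF_of_ne hij, hij]

lemma metM_inv_apply_of_ne (hhk : h ≠ k) (p : Fin 4 → ℝ) : (metM p)⁻¹ h k = 0 := by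
  rw [metM_eq_diagonal, inv_diagonal, diagonal_apply_ne _ hhk]

lemma metM_inv_apply_self (hg : ∀ k, metF k k p ≠ 0) (h : Fin 4) :
    (metM p)⁻¹ h h = (metF h h p)⁻¹ := by
  have hinv : (metM p)⁻¹ = diagonal fun k => (metF k k p)⁻¹ := by
    refine inv_eq_left_inv ?_
    rw [metM_eq_diagonal, diagonal_mul_diagonal]
    simp [hg]
  rw [hinv, diagonal_apply_eq]

-- No nondegeneracy is needed here: `inv_diagonal` keeps `(metM p)⁻¹` diagonal at every point.
lemma lcUp_eq (h i j : Fin 4) (p : Fin 4 → ℝ) :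
    lcUp h i j p = (metM p)⁻¹ h h * lcLow i j h p := by
  rw [lcUp, Fintype.sum_eq_single h]
  intro k hk
  rw [metM_inv_apply_of_ne (Ne.symm hk), zero_mul]

lemma pd_eq_of_hasDerivAt {F : (Fin 4 → ℝ) → ℝ} {f : ℝ → ℝ} {f' : ℝ}
    (hf : ∀ t, F (update p i t) = f t) (hd : HasDerivAt f f' (p i)) : pd i F p = f' := by
  rw [pd, funext hf, hd.deriv]

lemma pd_eq_zero_of_update_eq {F : (Fin 4 → ℝ) → ℝ} (hF : ∀ t, F (update p i t) = F p) :
    pd i F p = 0 :=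
  pd_eq_of_hasDerivAt hF (hasDerivAt_const _ _)

lemma pd_metF_of_ne (hjk : j ≠ k) : pd i (metF j k) p = 0 :=
  pd_eq_zero_of_update_eq fun _ => by rw [metF_of_ne hjk, metF_of_ne hjk]

lemma lcLow_of_ne (hij : i ≠ j) (hik : i ≠ k) (hjk : j ≠ k) : lcLow i j k p = 0 := by
  rw [lcLow, pd_metF_of_ne hjk, pd_metF_of_ne hik, pd_metF_of_ne hij]
  ring

lemma lcLow_self_left (hij : i ≠ j) : lcLow i j i p = pd j (metF i i) p / 2 := by
  rw [lcLow, pd_metF_of_ne (Ne.symm hij), pd_metF_of_ne hij]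
  ring

lemma lcLow_self_right : lcLow j i i p = pd j (metF i i) p / 2 := by
  rw [lcLow]
  ring

lemma lcLow_self_self (hij : i ≠ j) : lcLow j j i p = -pd i (metF j j) p / 2 := by
  rw [lcLow, pd_metF_of_ne (Ne.symm hij)]
  ring

lemma lcUp_self_left (hg : ∀ k, metF k k p ≠ 0) (hil : i ≠ l) :
    lcUp i i l p = pd l (metF i i) p / (2 * metF i i p) := by
  rw [lcUp_eq, metM_inv_apply_self hg, lcLow_self_left hil]
  field_simp [hg i]

lemma lcUp_self_self (hg : ∀ k, metF k k p ≠ 0) (hlj : l ≠ j) :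
    lcUp l j j p = -pd l (metF j j) p / (2 * metF l l p) := by
  rw [lcUp_eq, metM_inv_apply_self hg, lcLow_self_self hlj]
  field_simp [hg l]

lemma riem_eq_sum_of_update_eq (hij : i ≠ j)
    (hi : ∀ (q : Fin 4 → ℝ) t, metF i i (update q j t) = metF i i q)
    (hj : ∀ (q : Fin 4 → ℝ) t, metF j j (update q i t) = metF j j q) :
    riem i i j j p = ∑ l, lcUp i i l p * lcUp l j j p := by
  have hpdi (q : Fin 4 → ℝ) : pd j (metF i i) q = 0 := pd_eq_zero_of_update_eq (hi q)
  have hpdj (q : Fin 4 → ℝ) : pd i (metF j j) q = 0 := pd_eq_zero_of_update_eq (hj q)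
  have hΓij (q : Fin 4 → ℝ) : lcUp i i j q = 0 := by
    rw [lcUp_eq, lcLow_self_left hij, hpdi, zero_div, mul_zero]
  have hΓjj (q : Fin 4 → ℝ) : lcUp i j j q = 0 := by
    rw [lcUp_eq, lcLow_self_self hij, hpdj, neg_zero, zero_div, mul_zero]
  have hΓj (l : Fin 4) : lcUp i j l p = 0 := by
    by_cases hlj : l = j
    · rw [hlj, hΓjj]
    rw [lcUp_eq]
    by_cases hli : l = i
    · rw [hli, lcLow_self_right, hpdi, zero_div, mul_zero]
    · rw [lcLow_of_ne (Ne.symm hlj) (Ne.symm hij) hli, mul_zero]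
  rw [riem, pd_eq_zero_of_update_eq fun _ => by rw [hΓjj, hΓjj],
    pd_eq_zero_of_update_eq fun _ => by rw [hΓij, hΓij]]
  simp [hΓj]

lemma sec_eq_riem_div (hij : i ≠ j) (hi : metF i i p ≠ 0) :
    sec i j p = riem i i j j p / metF j j p := by
  rw [sec, Fintype.sum_eq_single i fun l hl => by rw [metF_of_ne (Ne.symm hl), zero_mul],
    metF_of_ne hij, zero_pow two_ne_zero, sub_zero, mul_div_mul_left _ _ hi]

end DiagonalMetric

lemma hasDerivAt_div_mul_add (a b c x : ℝ) (hb : b ≠ 0) (hx : x + c ≠ 0) :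
    HasDerivAt (fun t => a / (b * (t + c))) (-(a / (b * (x + c) ^ 2))) x := by
  have hd := ((hasDerivAt_id' x).add_const c).const_mul b
  refine ((hasDerivAt_const x a).div hd (mul_ne_zero hb hx)).congr_deriv ?_
  field_simp
  ring

lemma hasDerivAt_self_div_mul_add (b c x : ℝ) (hb : b ≠ 0) (hx : x + c ≠ 0) :
    HasDerivAt (fun t => t / (b * (t + c))) (c / (b * (x + c) ^ 2)) x := by
  have hd := ((hasDerivAt_id' x).add_const c).const_mul b
  refine ((hasDerivAt_id' x).div hd (mul_ne_zero hb hx)).congr_deriv ?_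
  field_simp
  ring

section Freund

variable {p : Fin 4 → ℝ}

@[simp] lemma metF_zero_zero : metF 0 0 p = 1 / (p 0 ^ 2 + p 0 * p 2) := by simp [metF]
@[simp] lemma metF_one_one : metF 1 1 p = p 2 / (p 1 ^ 2 * (p 0 + p 2)) := by simp [metF]
@[simp] lemma metF_two_two : metF 2 2 p = 1 / (p 2 ^ 2 + p 0 * p 2) := by simp [metF]
@[simp] lemma metF_three_three : metF 3 3 p = p 0 / (p 3 ^ 2 * (p 0 + p 2)) := by simp [metF]

lemma metF_pos (hp : ∀ i, 0 < p i) (k : Fin 4) : 0 < metF k k p := by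
  have := hp 0; have := hp 1; have := hp 2; have := hp 3
  fin_cases k <;> simp only [Fin.zero_eta, Fin.mk_one, Fin.reduceFinMk, Fin.isValue,
    metF_zero_zero, metF_one_one, metF_two_two, metF_three_three] <;> positivity

lemma metF_one_one_update_three (q : Fin 4 → ℝ) (t : ℝ) :
    metF 1 1 (update q 3 t) = metF 1 1 q := by
  simp

lemma metF_three_three_update_one (q : Fin 4 → ℝ) (t : ℝ) :
    metF 3 3 (update q 1 t) = metF 3 3 q := by
  simp

lemma pd_zero_metF_one_one (h1 : p 1 ≠ 0) (hs : p 0 + p 2 ≠ 0) :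
    pd 0 (metF 1 1) p = -(p 2 / (p 1 ^ 2 * (p 0 + p 2) ^ 2)) :=
  pd_eq_of_hasDerivAt (fun _ => by simp) (hasDerivAt_div_mul_add _ _ _ _ (pow_ne_zero 2 h1) hs)

lemma pd_two_metF_one_one (h1 : p 1 ≠ 0) (hs : p 0 + p 2 ≠ 0) :
    pd 2 (metF 1 1) p = p 0 / (p 1 ^ 2 * (p 0 + p 2) ^ 2) := by
  rw [add_comm (p 0)] at hs ⊢
  exact pd_eq_of_hasDerivAt (fun _ => by simp [add_comm (p 0)])
    (hasDerivAt_self_div_mul_add _ _ _ (pow_ne_zero 2 h1) hs)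

lemma pd_zero_metF_three_three (h3 : p 3 ≠ 0) (hs : p 0 + p 2 ≠ 0) :
    pd 0 (metF 3 3) p = p 2 / (p 3 ^ 2 * (p 0 + p 2) ^ 2) :=
  pd_eq_of_hasDerivAt (fun _ => by simp) (hasDerivAt_self_div_mul_add _ _ _ (pow_ne_zero 2 h3) hs)

lemma pd_two_metF_three_three (h3 : p 3 ≠ 0) (hs : p 0 + p 2 ≠ 0) :
    pd 2 (metF 3 3) p = -(p 0 / (p 3 ^ 2 * (p 0 + p 2) ^ 2)) := by
  rw [add_comm (p 0)] at hs ⊢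
  exact pd_eq_of_hasDerivAt (fun _ => by simp [add_comm (p 0)])
    (hasDerivAt_div_mul_add _ _ _ _ (pow_ne_zero 2 h3) hs)

end Freund

/-- The 0-sectional curvature of the `(β₁, β₂)` coordinate plane equals `1/4`. -/
theorem freund_sectional_beta_plane (p : Fin 4 → ℝ) (hp : ∀ i, 0 < p i) :
    sec 1 3 p = 1 / 4 := by
  have hg (k : Fin 4) : metF k k p ≠ 0 := (metF_pos hp k).ne'
  have h0 := (hp 0).ne'; have h1 := (hp 1).ne'; have h2 := (hp 2).ne'; have h3 := (hp 3).ne'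
  have hs : p 0 + p 2 ≠ 0 := (add_pos (hp 0) (hp 2)).ne'
  rw [sec_eq_riem_div (by decide) (hg 1),
    riem_eq_sum_of_update_eq (by decide) metF_one_one_update_three metF_three_three_update_one,
    Fin.sum_univ_four, lcUp_self_left hg (by decide : (1 : Fin 4) ≠ 0),
    lcUp_self_left hg (by decide : (1 : Fin 4) ≠ 2), lcUp_self_left hg (by decide : (1 : Fin 4) ≠ 3),
    lcUp_self_self hg (by decide : (0 : Fin 4) ≠ 3), lcUp_self_self hg (by decide : (1 : Fin 4) ≠ 3),
    lcUp_self_self hg (by decide : (2 : Fin 4) ≠ 3),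
    pd_eq_zero_of_update_eq (metF_one_one_update_three p),
    pd_eq_zero_of_update_eq (metF_three_three_update_one p),
    pd_zero_metF_one_one h1 hs, pd_two_metF_one_one h1 hs,
    pd_zero_metF_three_three h3 hs, pd_two_metF_three_three h3 hs]
  simp only [metF_zero_zero, metF_one_one, metF_two_two, metF_three_three]
  field_simp
  ring
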